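/- arXiv:1812.07391 — 2 statements merged into one kernel-verified Lean document; each statement's English description precedes it below -/
import Mathlib

section
/- Let 𝕂 be a Krein space with fundamental symmetry J and let {(W_i, v_i) : i ∈ I} be a J-fusion frame for 𝕂 with synthesis operator T_{W,v}. Define S₊(f) = Σ_{i∈I₊} v_i² π_{W_i}(Jf) and S₋(f) = Σ_{i∈I₋} v_i² π_{W_i}(Jf). Then S₊ and S₋ are J-positive operators (indeed [S₊f, f] = Σ_{i∈I₊} v_i² ‖π_{W_i}Jf‖² ≥ 0 and similarly for S₋), S₊ = T₊T₊^#, S₋ = −T₋T₋^#, and the J-fusion frame operator S_{W,v} = T_{W,v}T_{W,v}^# satisfies S_{W,v} = S₊ − S₋. -/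
noncomputable section

open scoped InnerProductSpace ENNReal

attribute [local instance] Classical.propDecidable

namespace JFF

instance : Fact ((1 : ℝ≥0∞) ≤ 2) := ⟨by norm_num⟩

variable {𝕂 : Type*} [NormedAddCommGroup 𝕂] [InnerProductSpace ℂ 𝕂] [CompleteSpace 𝕂]
variable {ι : Type*}

/-- The indefinite inner product `[x, y]` induced by the fundamental symmetry `J`;
with Mathlib's convention (inner products conjugate-linear in the *first* variable),
the paper's `[x, y] = ⟨Jx, y⟩`, which is linear in `x`, is `⟪J y, x⟫_ℂ`. -/
def ip (J : 𝕂 →L[ℂ] 𝕂) (x y : 𝕂) : ℂ := @inner ℂ _ _ (J y) x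

/-- `J` is a fundamental symmetry: a bounded selfadjoint operator with `J ∘ J = 1`. -/
def IsFundSym (J : 𝕂 →L[ℂ] 𝕂) : Prop := IsSelfAdjoint J ∧ J ∘L J = 1

/-- `W` is a `J`-nonnegative subspace. -/
def JNonneg (J : 𝕂 →L[ℂ] 𝕂) (W : Submodule ℂ 𝕂) : Prop :=
  ∀ f ∈ W, 0 ≤ (ip J f f).re

/-- `W` is a `J`-nonpositive subspace. -/
def JNonpos (J : 𝕂 →L[ℂ] 𝕂) (W : Submodule ℂ 𝕂) : Prop :=
  ∀ f ∈ W, (ip J f f).re ≤ 0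

/-- `W` is a `J`-negative subspace. -/
def JNeg (J : 𝕂 →L[ℂ] 𝕂) (W : Submodule ℂ 𝕂) : Prop :=
  ∀ f ∈ W, f ≠ 0 → (ip J f f).re < 0

/-- `W` is uniformly `J`-positive. -/
def UnifJPos (J : 𝕂 →L[ℂ] 𝕂) (W : Submodule ℂ 𝕂) : Prop :=
  ∃ α : ℝ, 0 < α ∧ ∀ f ∈ W, α * ‖f‖ ^ 2 ≤ (ip J f f).re

/-- `W` is uniformly `J`-negative. -/
def UnifJNeg (J : 𝕂 →L[ℂ] 𝕂) (W : Submodule ℂ 𝕂) : Prop :=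
  ∃ α : ℝ, 0 < α ∧ ∀ f ∈ W, (ip J f f).re ≤ -(α * ‖f‖ ^ 2)

/-- `W` is maximal uniformly `J`-positive. -/
def MaxUnifJPos (J : 𝕂 →L[ℂ] 𝕂) (W : Submodule ℂ 𝕂) : Prop :=
  UnifJPos J W ∧ ∀ W' : Submodule ℂ 𝕂, UnifJPos J W' → W ≤ W' → W' = W

/-- `W` is maximal uniformly `J`-negative. -/
def MaxUnifJNeg (J : 𝕂 →L[ℂ] 𝕂) (W : Submodule ℂ 𝕂) : Prop :=
  UnifJNeg J W ∧ ∀ W' : Submodule ℂ 𝕂, UnifJNeg J W' → W ≤ W' → W' = W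

/-- `W` is a maximal `J`-nonnegative subspace. -/
def MaxJNonneg (J : 𝕂 →L[ℂ] 𝕂) (W : Submodule ℂ 𝕂) : Prop :=
  JNonneg J W ∧ ∀ W' : Submodule ℂ 𝕂, JNonneg J W' → W ≤ W' → W' = W

/-- `W` is a maximal `J`-nonpositive subspace. -/
def MaxJNonpos (J : 𝕂 →L[ℂ] 𝕂) (W : Submodule ℂ 𝕂) : Prop :=
  JNonpos J W ∧ ∀ W' : Submodule ℂ 𝕂, JNonpos J W' → W ≤ W' → W' = W

/-- The `J`-orthogonal companion `M^{[⊥]} = {f | [f, m] = 0 ∀ m ∈ M}`. -/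
def JOrth (J : 𝕂 →L[ℂ] 𝕂) (M : Submodule ℂ 𝕂) : Submodule ℂ 𝕂 where
  carrier := {f | ∀ m ∈ M, ip J f m = 0}
  add_mem' := by
    intro a b ha hb m hm
    simp only [ip, inner_add_right] at *
    rw [ha m hm, hb m hm, add_zero]
  zero_mem' := by
    intro m hm
    simp [ip]
  smul_mem' := by
    intro c a ha m hm
    simp only [ip, inner_smul_right] at *
    rw [ha m hm, mul_zero]

/-- A closed subspace is regular (projectively complete) if `𝕂 = M ⊕ M^{[⊥]}`. -/
def Regular (J : 𝕂 →L[ℂ] 𝕂) (M : Submodule ℂ 𝕂) : Prop :=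
  IsClosed (M : Set 𝕂) ∧ IsCompl M (JOrth J M)

/-- The orthogonal projection `π_M` onto `M` as an endomorphism of `𝕂`
(junk value `0` if `M` is not closed). -/
def pr (M : Submodule ℂ 𝕂) : 𝕂 →L[ℂ] 𝕂 :=
  if h : IsClosed (M : Set 𝕂) then
    letI : CompleteSpace M := h.completeSpace_coe
    M.subtypeL ∘L M.orthogonalProjectionOnto
  else 0

/-- The Gramian operator `G_M = π_M ∘ J|_M : M → M`
(junk value `0` if `M` is not closed). -/
def gram (J : 𝕂 →L[ℂ] 𝕂) (M : Submodule ℂ 𝕂) : M →L[ℂ] M :=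
  if h : IsClosed (M : Set 𝕂) then
    letI : CompleteSpace M := h.completeSpace_coe
    M.orthogonalProjectionOnto ∘L (J ∘L M.subtypeL)
  else 0

/-- The reduced minimum modulus `γ(T) = inf {‖Tx‖ : x ∈ N(T)ᗮ, ‖x‖ = 1}`. -/
def rmm {E F : Type*} [NormedAddCommGroup E] [InnerProductSpace ℂ E]
    [NormedAddCommGroup F] [InnerProductSpace ℂ F] (T : E →L[ℂ] F) : ℝ :=
  sInf ((fun x => ‖T x‖) '' {x | x ∈ (LinearMap.ker (T : E →ₗ[ℂ] F))ᗮ ∧ ‖x‖ = 1})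

/-- `M_S`: the closure of `Σ_{i ∈ S} W i`. -/
def Mspace (W : ι → Submodule ℂ 𝕂) (S : Set ι) : Submodule ℂ 𝕂 :=
  (⨆ i ∈ S, W i).topologicalClosure

/-- The closed span of `{f i : i ∈ S}`. -/
def Mspan (f : ι → 𝕂) (S : Set ι) : Submodule ℂ 𝕂 :=
  (Submodule.span ℂ (f '' S)).topologicalClosure

/-- The subspace of the ℓ²-direct sum consisting of families supported on `S`. -/
def supp (W : ι → Submodule ℂ 𝕂) (S : Set ι) :
    Submodule ℂ (lp (fun i => W i) 2) where
  carrier := {x | ∀ i ∉ S, x i = 0}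
  add_mem' := by
    intro a b ha hb i hi
    have h : (a + b : lp (fun i => W i) 2) i = a i + b i := by
      rw [lp.coeFn_add]; rfl
    rw [h, ha i hi, hb i hi, add_zero]
  zero_mem' := by
    intro i hi
    have h : (0 : lp (fun i => W i) 2) i = 0 := by
      rw [lp.coeFn_zero]; rfl
    rw [h]
  smul_mem' := by
    intro c a ha i hi
    have h : (c • a : lp (fun i => W i) 2) i = c • a i := by
      rw [lp.coeFn_smul]; rfl
    rw [h, ha i hi, smul_zero]

/-- `T` is the synthesis operator of the weighted family of subspaces `(W, v)`:
`T {f_i} = Σ_i v_i f_i` (an unconditionally convergent sum). -/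
def IsSynth (W : ι → Submodule ℂ 𝕂) (v : ι → ℝ)
    (T : lp (fun i => W i) 2 →L[ℂ] 𝕂) : Prop :=
  ∀ x : lp (fun i => W i) 2, HasSum (fun i => (v i : ℂ) • (x i : 𝕂)) (T x)

/-- The range of `T ∘ P_S` where `P_S` is the orthogonal projection onto the
families supported on `S`, i.e. the image under `T` of the families supported on `S`. -/
def rng {W : ι → Submodule ℂ 𝕂} (T : lp (fun i => W i) 2 →L[ℂ] 𝕂)
    (S : Set ι) : Submodule ℂ 𝕂 :=
  (supp W S).map (T : lp (fun i => W i) 2 →ₗ[ℂ] 𝕂)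

/-- `(W, v)` (with the partition `Ipos`, `Ineg` of the index set and synthesis
operator `T`) is a `J`-fusion frame for `𝕂`. -/
structure IsJFusionFrame (J : 𝕂 →L[ℂ] 𝕂) (W : ι → Submodule ℂ 𝕂) (v : ι → ℝ)
    (Ipos Ineg : Set ι) (T : lp (fun i => W i) 2 →L[ℂ] 𝕂) : Prop where
  partition : ∀ i : ι, (i ∈ Ipos ∧ i ∉ Ineg) ∨ (i ∈ Ineg ∧ i ∉ Ipos)
  pos_nonneg : ∀ i ∈ Ipos, JNonneg J (W i)
  neg_neg : ∀ i ∈ Ineg, JNeg J (W i)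
  weights : ∀ i, 0 < v i
  synth : IsSynth W v T
  max_pos : MaxUnifJPos J (rng T Ipos)
  max_neg : MaxUnifJNeg J (rng T Ineg)

/-- `Bm ≤ Am < 0 < Ap ≤ Bp` are `J`-fusion frame bounds for `(W, v)`:
`A_± [f,f] ≤ Σ_{i ∈ I_±} v_i² |[π_{W_i} J f, f]| ≤ B_± [f,f]` for `f ∈ M_±`. -/
def JFusionBounds (J : 𝕂 →L[ℂ] 𝕂) (W : ι → Submodule ℂ 𝕂) (v : ι → ℝ)
    (Ipos Ineg : Set ι) (Bm Am Ap Bp : ℝ) : Prop :=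
  Bm ≤ Am ∧ Am < 0 ∧ 0 < Ap ∧ Ap ≤ Bp ∧
  (∀ f ∈ Mspace W Ipos,
    Summable (fun i : Ipos => v (i : ι) ^ 2 * ‖ip J (pr (W (i : ι)) (J f)) f‖) ∧
    Ap * (ip J f f).re ≤ ∑' i : Ipos, v (i : ι) ^ 2 * ‖ip J (pr (W (i : ι)) (J f)) f‖ ∧
    ∑' i : Ipos, v (i : ι) ^ 2 * ‖ip J (pr (W (i : ι)) (J f)) f‖ ≤ Bp * (ip J f f).re) ∧
  (∀ f ∈ Mspace W Ineg,
    Summable (fun i : Ineg => v (i : ι) ^ 2 * ‖ip J (pr (W (i : ι)) (J f)) f‖) ∧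
    Am * (ip J f f).re ≤ ∑' i : Ineg, v (i : ι) ^ 2 * ‖ip J (pr (W (i : ι)) (J f)) f‖ ∧
    ∑' i : Ineg, v (i : ι) ^ 2 * ‖ip J (pr (W (i : ι)) (J f)) f‖ ≤ Bm * (ip J f f).re)

/-- `(Bm, Am, Ap, Bp)` are the *optimal* `J`-fusion frame bounds. -/
def OptJFusionBounds (J : 𝕂 →L[ℂ] 𝕂) (W : ι → Submodule ℂ 𝕂) (v : ι → ℝ)
    (Ipos Ineg : Set ι) (Bm Am Ap Bp : ℝ) : Prop :=
  JFusionBounds J W v Ipos Ineg Bm Am Ap Bp ∧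
  ∀ Bm' Am' Ap' Bp' : ℝ, JFusionBounds J W v Ipos Ineg Bm' Am' Ap' Bp' →
    Bm' ≤ Bm ∧ Am ≤ Am' ∧ Ap' ≤ Ap ∧ Bp ≤ Bp'

/-- `{f i}` (with the partition `Ipos`, `Ineg` of the index set) is a `J`-frame for `𝕂`. -/
structure IsJFrame (J : 𝕂 →L[ℂ] 𝕂) (f : ι → 𝕂) (Ipos Ineg : Set ι) : Prop where
  partition : ∀ i : ι, (i ∈ Ipos ∧ i ∉ Ineg) ∨ (i ∈ Ineg ∧ i ∉ Ipos)
  nonneg : ∀ i ∈ Ipos, 0 ≤ (ip J (f i) (f i)).re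
  neg : ∀ i ∈ Ineg, (ip J (f i) (f i)).re < 0
  frame : ∃ C D : ℝ, 0 < C ∧ C ≤ D ∧ ∀ g : 𝕂,
    Summable (fun i => ‖@inner ℂ _ _ g (f i)‖ ^ 2) ∧
    C * ‖g‖ ^ 2 ≤ ∑' i, ‖@inner ℂ _ _ g (f i)‖ ^ 2 ∧
    ∑' i, ‖@inner ℂ _ _ g (f i)‖ ^ 2 ≤ D * ‖g‖ ^ 2
  max_pos : MaxUnifJPos J (Mspan f Ipos)
  max_neg : MaxUnifJNeg J (Mspan f Ineg)

/-- `Bm ≤ Am < 0 < Ap ≤ Bp` are `J`-frame bounds for `{f i}`: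
`A_± [g,g] ≤ Σ_{i ∈ I_±} |[g, f i]|² ≤ B_± [g,g]` for `g ∈ M_±`. -/
def JFrameBounds (J : 𝕂 →L[ℂ] 𝕂) (f : ι → 𝕂) (Ipos Ineg : Set ι)
    (Bm Am Ap Bp : ℝ) : Prop :=
  Bm ≤ Am ∧ Am < 0 ∧ 0 < Ap ∧ Ap ≤ Bp ∧
  (∀ g ∈ Mspan f Ipos,
    Summable (fun i : Ipos => ‖ip J g (f (i : ι))‖ ^ 2) ∧
    Ap * (ip J g g).re ≤ ∑' i : Ipos, ‖ip J g (f (i : ι))‖ ^ 2 ∧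
    ∑' i : Ipos, ‖ip J g (f (i : ι))‖ ^ 2 ≤ Bp * (ip J g g).re) ∧
  (∀ g ∈ Mspan f Ineg,
    Summable (fun i : Ineg => ‖ip J g (f (i : ι))‖ ^ 2) ∧
    Am * (ip J g g).re ≤ ∑' i : Ineg, ‖ip J g (f (i : ι))‖ ^ 2 ∧
    ∑' i : Ineg, ‖ip J g (f (i : ι))‖ ^ 2 ≤ Bm * (ip J g g).re)

/-- `(Bm, Am, Ap, Bp)` are the *optimal* `J`-frame bounds. -/
def OptJFrameBounds (J : 𝕂 →L[ℂ] 𝕂) (f : ι → 𝕂) (Ipos Ineg : Set ι)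
    (Bm Am Ap Bp : ℝ) : Prop :=
  JFrameBounds J f Ipos Ineg Bm Am Ap Bp ∧
  ∀ Bm' Am' Ap' Bp' : ℝ, JFrameBounds J f Ipos Ineg Bm' Am' Ap' Bp' →
    Bm' ≤ Bm ∧ Am ≤ Am' ∧ Ap' ≤ Ap ∧ Bp ≤ Bp'

/-! Testing against the families supported at a single index shows that the synthesis
operator `T {f_i} = Σ v_i f_i` has adjoint `T^* f = {v_i π_{W_i} f}`. Composing with a
diagonal operator `{f_i} ↦ {d_i f_i}` therefore gives `T D T^* g = Σ d_i v_i² π_{W_i} g`;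
for `D = J₂` and the restrictions of `T` to `I_±`, where `σ_i = ±1`, this yields
`T T^# = S` and `T_± T_±^# = ±S_±`. Finally `[S_± f, f] = Σ v_i² ⟪Jf, π_{W_i} Jf⟫` and
`⟪g, π g⟫ = ‖π g‖²` for an orthogonal projection `π`. -/

theorem pr_eq_starProjection (M : Submodule ℂ 𝕂) [CompleteSpace M] :
    pr M = M.starProjection := by
  rw [pr, dif_pos (completeSpace_coe_iff_isComplete.mp ‹_›).isClosed]
  rfl

theorem inner_pr_self (M : Submodule ℂ 𝕂) [CompleteSpace M] (g : 𝕂) :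
    ⟪g, pr M g⟫_ℂ = ((‖pr M g‖ ^ 2 : ℝ) : ℂ) := by
  rw [pr_eq_starProjection, M.starProjection_apply,
    ← M.inner_orthogonalProjectionOnto_eq_of_mem_right, inner_self_eq_norm_sq_to_K]
  norm_cast

theorem inner_eq_tsum_of_hasSum_sq_smul_pr {κ : Type*} (V : κ → Submodule ℂ 𝕂)
    [∀ k, CompleteSpace (V k)] (a : κ → ℝ) {g s : 𝕂}
    (hs : HasSum (fun k => ((a k : ℂ) ^ 2) • pr (V k) g) s) :
    ⟪g, s⟫_ℂ = ((∑' k, a k ^ 2 * ‖pr (V k) g‖ ^ 2 : ℝ) : ℂ) := by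
  have h := hs.mapL (innerSL ℂ g)
  simp only [innerSL_apply_apply, inner_smul_right, inner_pr_self] at h
  rw [Complex.ofReal_tsum, ← h.tsum_eq]
  push_cast
  rfl

section Synthesis

variable {W : ι → Submodule ℂ 𝕂} [∀ i, CompleteSpace (W i)] {c : ι → ℝ}
  {T : lp (fun i => W i) 2 →L[ℂ] 𝕂}

omit [CompleteSpace 𝕂] [∀ i, CompleteSpace (W i)] in
theorem IsSynth.apply_single (hT : IsSynth W c T) (i : ι) (w : W i) :
    T (lp.single 2 i w) = (c i : ℂ) • (w : 𝕂) := by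
  refine (hT _).unique ?_
  convert hasSum_ite_eq i ((c i : ℂ) • (w : 𝕂)) using 1
  funext j
  rcases eq_or_ne j i with rfl | hj
  · simp
  · simp [hj]

theorem IsSynth.adjoint_apply (hT : IsSynth W c T) (f : 𝕂) (i : ι) :
    ((T.adjoint f i : W i) : 𝕂) = (c i : ℂ) • pr (W i) f := by
  rw [pr_eq_starProjection, (W i).starProjection_apply, ← Submodule.coe_smul]
  congr 1
  refine ext_inner_right ℂ fun w => ?_
  rw [← lp.inner_single_right, ContinuousLinearMap.adjoint_inner_left, hT.apply_single,
    inner_smul_right, inner_smul_left, Complex.conj_ofReal,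
    Submodule.inner_orthogonalProjectionOnto_eq_of_mem_right]

omit [CompleteSpace 𝕂] [∀ i, CompleteSpace (W i)] in
theorem IsSynth.comp_restrict (hT : IsSynth W c T) {A : Set ι}
    {P : lp (fun i => W i) 2 →L[ℂ] lp (fun i => W i) 2}
    (hP : ∀ x i, P x i = if i ∈ A then x i else 0) :
    IsSynth W (A.indicator c) (T ∘L P) := by
  intro x
  show HasSum _ (T (P x))
  convert hT (P x) using 1
  funext i
  by_cases hi : i ∈ A <;> simp [hP, hi]

theorem IsSynth.hasSum_comp_diagonal_comp_adjoint (hT : IsSynth W c T)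
    {D : lp (fun i => W i) 2 →L[ℂ] lp (fun i => W i) 2} {d : ι → ℂ}
    (hD : ∀ x i, D x i = d i • x i) (g : 𝕂) :
    HasSum (fun i => (d i * (c i : ℂ) ^ 2) • pr (W i) g) (T (D (T.adjoint g))) := by
  convert hT (D (T.adjoint g)) using 1
  funext i
  rw [hD, Submodule.coe_smul, hT.adjoint_apply, smul_smul, smul_smul]
  ring_nf

theorem IsSynth.hasSum_restrict_comp_diagonal_comp_adjoint (hT : IsSynth W c T) {A : Set ι}
    {P : lp (fun i => W i) 2 →L[ℂ] lp (fun i => W i) 2}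
    (hP : ∀ x i, P x i = if i ∈ A then x i else 0)
    {D : lp (fun i => W i) 2 →L[ℂ] lp (fun i => W i) 2} {d : ι → ℂ}
    (hD : ∀ x i, D x i = d i • x i) {s : ℂ} (hs : ∀ i ∈ A, d i = s) (g : 𝕂) :
    HasSum (fun i : A => (s * (c i : ℂ) ^ 2) • pr (W i) g)
      ((T ∘L P) (D ((T ∘L P).adjoint g))) := by
  refine (hasSum_subtype_iff_indicator (f := fun i => (s * (c i : ℂ) ^ 2) • pr (W i) g)).mpr ?_
  convert (hT.comp_restrict hP).hasSum_comp_diagonal_comp_adjoint hD g using 1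
  funext i
  by_cases hi : i ∈ A <;> simp [hi, hs]

end Synthesis

theorem hasSum_sign_smul_of_hasSum_compl {R E : Type*} [Ring R] [AddCommGroup E] [Module R E]
    [TopologicalSpace E] [IsTopologicalAddGroup E] {f : ι → E} {A : Set ι} {a b : E}
    (ha : HasSum (fun i : A => f i) a) (hb : HasSum (fun i : ↥Aᶜ => f i) b) :
    HasSum (fun i => (if i ∈ A then (1 : R) else -1) • f i) (a - b) := by
  convert (hasSum_subtype_iff_indicator.mp ha).sub (hasSum_subtype_iff_indicator.mp hb) using 1
  funext i
  by_cases hi : i ∈ A <;> simp [hi]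

theorem stmt2_general {𝕂 : Type*} [NormedAddCommGroup 𝕂] [InnerProductSpace ℂ 𝕂] [CompleteSpace 𝕂]
    {ι : Type*} (J : 𝕂 →L[ℂ] 𝕂)
    (W : ι → Submodule ℂ 𝕂) [∀ i, CompleteSpace (W i)]
    (v : ι → ℝ) (Ipos Ineg : Set ι)
    (T : lp (fun i => W i) 2 →L[ℂ] 𝕂)
    (hF : IsJFusionFrame J W v Ipos Ineg T)
    -- the orthogonal projections `P₊`, `P₋` of the ℓ²-direct sum onto the families
    -- supported on `I₊` resp. `I₋`:
    (Ppos Pneg : lp (fun i => W i) 2 →L[ℂ] lp (fun i => W i) 2)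
    (hPpos : ∀ x (i : ι), (Ppos x) i = if i ∈ Ipos then x i else 0)
    (hPneg : ∀ x (i : ι), (Pneg x) i = if i ∈ Ineg then x i else 0)
    -- the fundamental symmetry `J₂ {f_i} = {σ_i f_i}` of the ℓ²-direct sum:
    (J2 : lp (fun i => W i) 2 →L[ℂ] lp (fun i => W i) 2)
    (hJ2 : ∀ x (i : ι), (J2 x) i = (if i ∈ Ipos then (1 : ℂ) else -1) • x i)
    -- the operators `S₊`, `S₋` and the `J`-fusion frame operator `S`:
    (Splus Sminus S : 𝕂 →L[ℂ] 𝕂)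
    (hSplus : ∀ f : 𝕂,
      HasSum (fun i : Ipos => ((v (i : ι) : ℂ) ^ 2) • pr (W (i : ι)) (J f)) (Splus f))
    (hSminus : ∀ f : 𝕂,
      HasSum (fun i : Ineg => ((v (i : ι) : ℂ) ^ 2) • pr (W (i : ι)) (J f)) (Sminus f))
    (hS : ∀ f : 𝕂,
      HasSum (fun i : ι =>
        ((if i ∈ Ipos then (1 : ℂ) else -1) * (v i : ℂ) ^ 2) • pr (W i) (J f)) (S f)) :
    -- `[S₊ f, f] = Σ_{i∈I₊} v_i² ‖π_{W_i}(Jf)‖²` and similarly for `S₋`: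
    (∀ f : 𝕂, ip J (Splus f) f =
      ((∑' i : Ipos, v (i : ι) ^ 2 * ‖pr (W (i : ι)) (J f)‖ ^ 2 : ℝ) : ℂ)) ∧
    (∀ f : 𝕂, ip J (Sminus f) f =
      ((∑' i : Ineg, v (i : ι) ^ 2 * ‖pr (W (i : ι)) (J f)‖ ^ 2 : ℝ) : ℂ)) ∧
    -- `S₊` and `S₋` are `J`-positive:
    (∀ f : 𝕂, 0 ≤ (ip J (Splus f) f).re) ∧ (∀ f : 𝕂, 0 ≤ (ip J (Sminus f) f).re) ∧
    -- `S₊ = T₊ T₊^#` and `S₋ = - T₋ T₋^#`: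
    Splus = (T ∘L Ppos) ∘L
      (J2 ∘L ContinuousLinearMap.adjoint (T ∘L Ppos) ∘L J) ∧
    Sminus = -((T ∘L Pneg) ∘L
      (J2 ∘L ContinuousLinearMap.adjoint (T ∘L Pneg) ∘L J)) ∧
    -- `S = T T^#` and `S = S₊ - S₋`:
    S = T ∘L (J2 ∘L ContinuousLinearMap.adjoint T ∘L J) ∧
    S = Splus - Sminus := by
  obtain rfl : Ineg = Iposᶜ :=
    Set.ext fun i => by rcases hF.partition i with h | h <;> simp [h]
  have hipPos (f : 𝕂) : ip J (Splus f) f = _ :=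
    inner_eq_tsum_of_hasSum_sq_smul_pr _ _ (hSplus f)
  have hipNeg (f : 𝕂) : ip J (Sminus f) f = _ :=
    inner_eq_tsum_of_hasSum_sq_smul_pr _ _ (hSminus f)
  refine ⟨hipPos, hipNeg, fun f => ?_, fun f => ?_, ?_, ?_, ?_, ?_⟩
  · rw [hipPos, Complex.ofReal_re]
    positivity
  · rw [hipNeg, Complex.ofReal_re]
    positivity
  · ext f
    refine (hSplus f).unique ?_
    simpa only [one_mul, ContinuousLinearMap.comp_apply] using
      hF.synth.hasSum_restrict_comp_diagonal_comp_adjoint hPpos hJ2 (s := 1)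
        (fun i hi => if_pos hi) (J f)
  · ext f
    rw [_root_.neg_apply, ← neg_eq_iff_eq_neg]
    refine (hSminus f).neg.unique ?_
    simpa only [neg_one_mul, neg_smul, ContinuousLinearMap.comp_apply] using
      hF.synth.hasSum_restrict_comp_diagonal_comp_adjoint hPneg hJ2 (s := -1)
        (fun i hi => if_neg hi) (J f)
  · ext f
    exact (hS f).unique (hF.synth.hasSum_comp_diagonal_comp_adjoint hJ2 (J f))
  · ext f
    simp_rw [mul_smul] at hS
    exact (hS f).unique (hasSum_sign_smul_of_hasSum_compl (hSplus f) (hSminus f))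

/-- For a `J`-fusion frame with synthesis operator `T`, the operators
`S₊ f = Σ_{i∈I₊} v_i² π_{W_i}(Jf)` and `S₋ f = Σ_{i∈I₋} v_i² π_{W_i}(Jf)` satisfy
`[S₊ f, f] = Σ_{i∈I₊} v_i² ‖π_{W_i}Jf‖² ≥ 0` (and similarly for `S₋`), so both are
`J`-positive; moreover `S₊ = T₊ T₊^#`, `S₋ = - T₋ T₋^#` (`T_± = T ∘ P_±`,
`T_±^# = J₂ T_±^* J`), and the `J`-fusion frame operator
`S f = Σ_i σ_i v_i² π_{W_i}(Jf) = T T^#` satisfies `S = S₊ - S₋`. -/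
theorem stmt2 {𝕂 : Type*} [NormedAddCommGroup 𝕂] [InnerProductSpace ℂ 𝕂] [CompleteSpace 𝕂]
    {ι : Type*} (J : 𝕂 →L[ℂ] 𝕂) (hJ : IsFundSym J)
    (W : ι → Submodule ℂ 𝕂) (hWc : ∀ i, IsClosed ((W i : Set 𝕂))) [∀ i, CompleteSpace (W i)]
    (v : ι → ℝ) (Ipos Ineg : Set ι)
    (T : lp (fun i => W i) 2 →L[ℂ] 𝕂)
    (hF : IsJFusionFrame J W v Ipos Ineg T)
    -- the orthogonal projections `P₊`, `P₋` of the ℓ²-direct sum onto the families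
    -- supported on `I₊` resp. `I₋`:
    (Ppos Pneg : lp (fun i => W i) 2 →L[ℂ] lp (fun i => W i) 2)
    (hPpos : ∀ x (i : ι), (Ppos x) i = if i ∈ Ipos then x i else 0)
    (hPneg : ∀ x (i : ι), (Pneg x) i = if i ∈ Ineg then x i else 0)
    -- the fundamental symmetry `J₂ {f_i} = {σ_i f_i}` of the ℓ²-direct sum:
    (J2 : lp (fun i => W i) 2 →L[ℂ] lp (fun i => W i) 2)
    (hJ2 : ∀ x (i : ι), (J2 x) i = (if i ∈ Ipos then (1 : ℂ) else -1) • x i)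
    -- the operators `S₊`, `S₋` and the `J`-fusion frame operator `S`:
    (Splus Sminus S : 𝕂 →L[ℂ] 𝕂)
    (hSplus : ∀ f : 𝕂,
      HasSum (fun i : Ipos => ((v (i : ι) : ℂ) ^ 2) • pr (W (i : ι)) (J f)) (Splus f))
    (hSminus : ∀ f : 𝕂,
      HasSum (fun i : Ineg => ((v (i : ι) : ℂ) ^ 2) • pr (W (i : ι)) (J f)) (Sminus f))
    (hS : ∀ f : 𝕂,
      HasSum (fun i : ι =>
        ((if i ∈ Ipos then (1 : ℂ) else -1) * (v i : ℂ) ^ 2) • pr (W i) (J f)) (S f)) :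
    -- `[S₊ f, f] = Σ_{i∈I₊} v_i² ‖π_{W_i}(Jf)‖²` and similarly for `S₋`:
    (∀ f : 𝕂, ip J (Splus f) f =
      ((∑' i : Ipos, v (i : ι) ^ 2 * ‖pr (W (i : ι)) (J f)‖ ^ 2 : ℝ) : ℂ)) ∧
    (∀ f : 𝕂, ip J (Sminus f) f =
      ((∑' i : Ineg, v (i : ι) ^ 2 * ‖pr (W (i : ι)) (J f)‖ ^ 2 : ℝ) : ℂ)) ∧
    -- `S₊` and `S₋` are `J`-positive:
    (∀ f : 𝕂, 0 ≤ (ip J (Splus f) f).re) ∧ (∀ f : 𝕂, 0 ≤ (ip J (Sminus f) f).re) ∧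
    -- `S₊ = T₊ T₊^#` and `S₋ = - T₋ T₋^#`:
    Splus = (T ∘L Ppos) ∘L
      (J2 ∘L ContinuousLinearMap.adjoint (T ∘L Ppos) ∘L J) ∧
    Sminus = -((T ∘L Pneg) ∘L
      (J2 ∘L ContinuousLinearMap.adjoint (T ∘L Pneg) ∘L J)) ∧
    -- `S = T T^#` and `S = S₊ - S₋`:
    S = T ∘L (J2 ∘L ContinuousLinearMap.adjoint T ∘L J) ∧
    S = Splus - Sminus :=
  stmt2_general J W v Ipos Ineg T hF Ppos Pneg hPpos hPneg J2 hJ2 Splus Sminus S hSplus hSminus hS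

end JFF
end
end

section
/- Let 𝕂 be a complex Hilbert space with a fundamental symmetry J (bounded, self-adjoint, J² = I), let M be a closed subspace of 𝕂 with orthogonal projection π_M, and let T : H₀ → 𝕂 be a bounded linear operator from a Hilbert space H₀. If there exist constants 0 < A ≤ B such that A π_M ≤ π_M J T T^* J π_M ≤ B π_M in the ordering of bounded self-adjoint operators, then the range of π_M J T equals M. -/
noncomputable section

open scoped InnerProductSpace ENNReal

attribute [local instance] Classical.propDecidable

namespace JFF

variable {𝕂 : Type*} [NormedAddCommGroup 𝕂] [InnerProductSpace ℂ 𝕂] [CompleteSpace 𝕂]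
variable {ι : Type*}

/-! A coercive operator `A ‖f‖² ≤ re ⟪G f, f⟫` on a Hilbert space is bounded below, so its
range is closed, and its range has trivial orthogonal complement, so it is onto (the
Lax–Milgram argument). Restricting `π_M J T T^* J π_M` to `M`, the lower bound says
exactly that this restriction is coercive, hence every `m ∈ M` is `π_M J T (T^* J π_M f)`. -/

section Coercive

open RCLike

variable {𝕜 E : Type*} [RCLike 𝕜] [NormedAddCommGroup E] [InnerProductSpace 𝕜 E]

lemma mul_norm_le_norm_apply_of_coercive {G : E →L[𝕜] E} {A : ℝ}
    (hG : ∀ f, A * ‖f‖ ^ 2 ≤ re ⟪G f, f⟫_𝕜) (f : E) : A * ‖f‖ ≤ ‖G f‖ := by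
  rcases (norm_nonneg f).eq_or_lt with hf | hf
  · simp [← hf]
  refine le_of_mul_le_mul_right ?_ hf
  calc A * ‖f‖ * ‖f‖ = A * ‖f‖ ^ 2 := by ring
    _ ≤ re ⟪G f, f⟫_𝕜 := hG f
    _ ≤ ‖G f‖ * ‖f‖ := (re_le_norm _).trans (norm_inner_le_norm _ _)

lemma range_eq_top_of_coercive [CompleteSpace E] {G : E →L[𝕜] E} {A : ℝ} (hA : 0 < A)
    (hG : ∀ f, A * ‖f‖ ^ 2 ≤ re ⟪G f, f⟫_𝕜) : (G : E →ₗ[𝕜] E).range = ⊤ := by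
  have hanti : AntilipschitzWith (Real.toNNReal A⁻¹) G :=
    G.antilipschitz_of_bound fun f => by
      rw [Real.coe_toNNReal _ (inv_nonneg.mpr hA.le), ← div_eq_inv_mul, le_div_iff₀' hA]
      exact mul_norm_le_norm_apply_of_coercive hG f
  have hclosed : IsClosed ((G : E →ₗ[𝕜] E).range : Set E) := by
    rw [LinearMap.coe_range]
    exact hanti.isClosed_range G.uniformContinuous
  have := hclosed.completeSpace_coe
  rw [← Submodule.orthogonal_orthogonal (G : E →ₗ[𝕜] E).range,
    Submodule.orthogonal_eq_top_iff, Submodule.eq_bot_iff]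
  intro g hg
  have hGg : ⟪G g, g⟫_𝕜 = 0 :=
    (Submodule.mem_orthogonal _ g).mp hg (G g) (LinearMap.mem_range_self _ g)
  have := hG g
  rw [hGg, map_zero] at this
  simpa [hA.ne'] using le_antisymm (nonpos_of_mul_nonpos_right this hA) (sq_nonneg ‖g‖)

lemma exists_apply_eq_of_coercive_on {C : E →L[𝕜] E} {M : Submodule 𝕜 E} [CompleteSpace M]
    (hCM : ∀ x, C x ∈ M) {A : ℝ} (hA : 0 < A)
    (hC : ∀ f ∈ M, A * ‖f‖ ^ 2 ≤ re ⟪C f, f⟫_𝕜) {m : E} (hm : m ∈ M) :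
    ∃ f ∈ M, C f = m := by
  set G : M →L[𝕜] M := (C ∘L M.subtypeL).codRestrict M fun f => hCM f
  obtain ⟨f, hf⟩ : (⟨m, hm⟩ : M) ∈ (G : M →ₗ[𝕜] M).range := by
    rw [range_eq_top_of_coercive (G := G) hA fun f => hC f f.2]
    trivial
  exact ⟨f, f.2, congrArg Subtype.val hf⟩

end Coercive

lemma pr_apply_mem (M : Submodule ℂ 𝕂) (x : 𝕂) : pr M x ∈ M := by
  unfold pr
  split_ifs
  · exact Subtype.property _
  · exact M.zero_mem

lemma pr_apply_of_mem {M : Submodule ℂ 𝕂} (hM : IsClosed (M : Set 𝕂)) {x : 𝕂} (hx : x ∈ M) :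
    pr M x = x := by
  have := hM.completeSpace_coe
  rw [pr, dif_pos hM]
  exact Submodule.starProjection_eq_self_iff.mpr hx

theorem stmt11_general {𝕂 H₀ : Type*}
    [NormedAddCommGroup 𝕂] [InnerProductSpace ℂ 𝕂] [CompleteSpace 𝕂]
    [NormedAddCommGroup H₀] [InnerProductSpace ℂ H₀] [CompleteSpace H₀]
    (J : 𝕂 →L[ℂ] 𝕂)
    (M : Submodule ℂ 𝕂) (hM : IsClosed ((M : Set 𝕂)))
    (T : H₀ →L[ℂ] 𝕂) (A : ℝ) (hA : 0 < A)
    (h₁ : ∀ f : 𝕂,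
      A * (@inner ℂ _ _ (pr M f) f).re ≤
        (@inner ℂ _ _
          ((pr M ∘L J ∘L T ∘L ContinuousLinearMap.adjoint T ∘L J ∘L pr M) f) f).re) :
    LinearMap.range ((pr M ∘L J ∘L T : H₀ →L[ℂ] 𝕂) : H₀ →ₗ[ℂ] 𝕂) = M := by
  have := hM.completeSpace_coe
  refine le_antisymm (by rintro _ ⟨x, rfl⟩; exact pr_apply_mem M _) fun m hm => ?_
  set C := pr M ∘L J ∘L T ∘L ContinuousLinearMap.adjoint T ∘L J ∘L pr M
  have hcoercive : ∀ f ∈ M, A * ‖f‖ ^ 2 ≤ RCLike.re ⟪C f, f⟫_ℂ := fun f hf => by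
    simpa only [pr_apply_of_mem hM hf, ← RCLike.re_to_complex, inner_self_eq_norm_sq] using h₁ f
  obtain ⟨f, -, rfl⟩ :=
    exists_apply_eq_of_coercive_on (C := C) (fun _ => pr_apply_mem M _) hA hcoercive hm
  exact ⟨ContinuousLinearMap.adjoint T (J (pr M f)), rfl⟩

/-- (Douglas-type argument.) Let `J` be a fundamental symmetry of the
Hilbert space `𝕂`, `M` a closed subspace, and `T : H₀ → 𝕂` bounded. If there are
`0 < A ≤ B` with `A π_M ≤ π_M J T T^* J π_M ≤ B π_M` (order of bounded selfadjoint
operators), then the range of `π_M J T` equals `M`. -/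
theorem stmt11 {𝕂 H₀ : Type*}
    [NormedAddCommGroup 𝕂] [InnerProductSpace ℂ 𝕂] [CompleteSpace 𝕂]
    [NormedAddCommGroup H₀] [InnerProductSpace ℂ H₀] [CompleteSpace H₀]
    (J : 𝕂 →L[ℂ] 𝕂) (hJ : IsFundSym J)
    (M : Submodule ℂ 𝕂) (hM : IsClosed ((M : Set 𝕂)))
    (T : H₀ →L[ℂ] 𝕂) (A B : ℝ) (hA : 0 < A) (hAB : A ≤ B)
    (h₁ : ∀ f : 𝕂,
      A * (@inner ℂ _ _ (pr M f) f).re ≤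
        (@inner ℂ _ _
          ((pr M ∘L J ∘L T ∘L ContinuousLinearMap.adjoint T ∘L J ∘L pr M) f) f).re)
    (h₂ : ∀ f : 𝕂,
      (@inner ℂ _ _
          ((pr M ∘L J ∘L T ∘L ContinuousLinearMap.adjoint T ∘L J ∘L pr M) f) f).re ≤
        B * (@inner ℂ _ _ (pr M f) f).re) :
    LinearMap.range ((pr M ∘L J ∘L T : H₀ →L[ℂ] 𝕂) : H₀ →ₗ[ℂ] 𝕂) = M :=
  stmt11_general J M hM T A hA h₁

end JFF
end
end
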